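/- arXiv:1109.0626 — 3 statements merged into one kernel-verified Lean document; each statement's English description precedes it below -/
import Mathlib

section
/- Let l be a Lie algebra over a field K of characteristic zero and E, F ∈ l with H := [E,F], [H,E] = 2E, [H,F] = -2F. Then in the universal enveloping algebra U(l), for all ℓ, m ∈ N: E^(ℓ) F^(m) = Σ_{s=0}^{min(ℓ,m)} F^(m-s) · C(H - m - ℓ + 2s, s) · E^(ℓ-s), where X^(k) := X^k/k! and C(H - c, s) := (H-c)(H-c-1)⋯(H-c-s+1)/s!. -/
noncomputable section

/-- The divided power `x^(k) := x^k / k!` in a `K`-algebra. -/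
def dividedPow (K : Type) [Field K] {A : Type} [Ring A] [Algebra K A] (x : A) (k : ℕ) : A :=
  (k.factorial : K)⁻¹ • x ^ k

/-- The binomial coefficient `C(x - c, s) = (x-c)(x-c-1)⋯(x-c-s+1)/s!` of an algebra
element `x` shifted by scalars: here we take the ordered product of the factors
`x - (c + j)`, `j = 0, …, s-1` (they commute with each other), divided by `s!`. -/
def binomOf (K : Type) [Field K] {A : Type} [Ring A] [Algebra K A] (x : A) (c : K) (s : ℕ) : A :=
  (s.factorial : K)⁻¹ •
    ((List.range s).map (fun j => x - algebraMap K A (c + (j : K)))).prod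

end

/-!
Induction on `ℓ`. Multiplying the identity for `ℓ` on the left by `E`, the factor `E` moves past
`F^(a)` by `E F^(a) = F^(a) E + F^(a-1) (H - a + 1)`, past polynomials in `H` by
`E p(H) = p(H - 2) E`, and is absorbed by `E E^(b) = (b + 1) E^(b+1)`. Comparing the result with
`ℓ + 1` times the right-hand side for `ℓ + 1` reduces, term by term, to the identity
`r C(y + 1, s + 1) = (r - s - 1) C(y, s + 1) + (y - s + r) C(y, s)` between binomial polynomials,
which is Pascal's rule combined with `(s + 1) C(y, s + 1) = (y - s) C(y, s)`.
-/

open Polynomial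

section BinomialPolynomial

variable {K : Type} [Field K] [CharZero K]

noncomputable def binomPoly (K : Type) [Field K] (s : ℕ) : K[X] :=
  (s.factorial : K)⁻¹ • descPochhammer K s

theorem binomPoly_succ_comp_X_add_one (s : ℕ) :
    (binomPoly K (s + 1)).comp (X + 1) = binomPoly K (s + 1) + binomPoly K s := by
  have hpascal : (descPochhammer K (s + 1)).comp (X + 1)
      = descPochhammer K (s + 1) + (s + 1 : K) • descPochhammer K s := by
    nth_rw 1 [descPochhammer_succ_left]
    rw [mul_comp, comp_assoc, descPochhammer_succ_right]
    simp only [X_comp, sub_comp, one_comp, add_sub_cancel_right, comp_X, smul_eq_C_mul, map_add,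
      map_natCast, map_one]
    ring
  simp only [binomPoly, smul_comp, hpascal, smul_add, smul_smul, Nat.factorial_succ]
  congr 2
  push_cast
  field_simp

theorem smul_binomPoly_succ_comp_X_add_one (r : K) (s : ℕ) :
    r • (binomPoly K (s + 1)).comp (X + 1)
      = (r - (s + 1)) • binomPoly K (s + 1) + (X - C (s - r)) * binomPoly K s := by
  have habsorb : (s + 1 : K) • binomPoly K (s + 1) = (X - C (s : K)) * binomPoly K s := by
    have hfac : (s + 1 : K) * ((s + 1).factorial : K)⁻¹ = (s.factorial : K)⁻¹ := by
      rw [Nat.factorial_succ]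
      push_cast
      field_simp
    rw [binomPoly, binomPoly, smul_smul, hfac, descPochhammer_succ_right, ← C_eq_natCast,
      mul_comm, mul_smul_comm]
  rw [binomPoly_succ_comp_X_add_one]
  simp only [smul_eq_C_mul, map_add, map_sub, map_natCast, map_one] at habsorb ⊢
  linear_combination habsorb

end BinomialPolynomial

section Commutation

variable {R A : Type*} [CommRing R] [Ring A] [Algebra R A]

theorem SemiconjBy.aeval {e x y : A} (h : SemiconjBy e x y) (p : R[X]) :
    SemiconjBy e (aeval x p) (aeval y p) := by
  induction p using Polynomial.induction_on' with
  | add p q hp hq => simpa only [map_add] using hp.add_right hq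
  | monomial n a =>
    simpa only [aeval_monomial] using
      SemiconjBy.mul_right (Algebra.commute_algebraMap_right a e) (h.pow_right n)

theorem semiconjBy_sub_algebraMap {h x : A} {r : R} (hx : h * x - x * h = r • x) (c : R) :
    SemiconjBy x (h - algebraMap R A c) (h - algebraMap R A (c + r)) := by
  have hxh : x * h = h * x - r • x := by rw [← hx]; abel
  rw [SemiconjBy, mul_sub, hxh, ← Algebra.commutes, map_add, Algebra.smul_def]
  noncomm_ring

theorem mul_pow_succ_of_sl2 {e f h : A} (hef : e * f - f * e = h)
    (hhf : h * f - f * h = (-2 : R) • f) (n : ℕ) :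
    e * f ^ (n + 1) = f ^ (n + 1) * e + ((n : R) + 1) • (f ^ n * (h - algebraMap R A n)) := by
  induction n with
  | zero => simp [← hef]
  | succ n ih =>
    have hef' : e * f = f * e + h := by rw [← hef]; abel
    have hfh : (h - algebraMap R A n) * f = f * (h - algebraMap R A (n + 2)) := by
      have := (semiconjBy_sub_algebraMap hhf ((n : R) + 2)).eq
      rwa [add_neg_cancel_right, eq_comm] at this
    have hexp (c : R) :
        f ^ (n + 1) * (h - algebraMap R A c) = f ^ (n + 1) * h - c • f ^ (n + 1) := by
      rw [mul_sub, ← Algebra.commutes, ← Algebra.smul_def]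
    calc e * f ^ (n + 2) = e * f ^ (n + 1) * f := by rw [pow_succ _ (n + 1), mul_assoc]
      _ = f ^ (n + 1) * (e * f) + ((n : R) + 1) • (f ^ n * ((h - algebraMap R A n) * f)) := by
        rw [ih, add_mul, smul_mul_assoc, mul_assoc, mul_assoc]
      _ = f ^ (n + 2) * e + f ^ (n + 1) * h
            + ((n : R) + 1) • (f ^ (n + 1) * (h - algebraMap R A (n + 2))) := by
        rw [hef', hfh, mul_add, ← mul_assoc, ← pow_succ, ← mul_assoc, ← pow_succ]
      _ = f ^ (n + 2) * e
            + ((n + 1 : ℕ) + 1 : R) • (f ^ (n + 1) * (h - algebraMap R A (n + 1 : ℕ))) := by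
        rw [hexp, hexp]
        push_cast
        module

end Commutation

section Algebra

variable {K : Type} [Field K] {A : Type} [Ring A] [Algebra K A]

theorem binomOf_eq_aeval (x : A) (c : K) (s : ℕ) :
    binomOf K x c s = aeval (x - algebraMap K A c) (binomPoly K s) := by
  have hprod (n : ℕ) :
      (((List.range n).map (Nat.cast : ℕ → K)).map fun j => x - algebraMap K A (c + j)).prod
        = aeval (x - algebraMap K A c) (descPochhammer K n) := by
    induction n with
    | zero => simp
    | succ n ih =>
      rw [List.range_succ, List.map_append, List.map_append, List.prod_append, ih,
        descPochhammer_succ_right, map_mul]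
      simp [sub_sub]
  simp only [binomOf, List.pure_def, List.bind_eq_flatMap, ← List.map_eq_flatMap, hprod,
    binomPoly, map_smul]

theorem binomOf_zero (x : A) (c : K) : binomOf K x c 0 = 1 := by
  simp [binomOf]

theorem smul_binomOf_sub_one_succ [CharZero K] (x : A) (r c : K) (s : ℕ) :
    r • binomOf K x (c - 1) (s + 1)
      = (r - (s + 1)) • binomOf K x c (s + 1)
        + (x - algebraMap K A (c + s - r)) * binomOf K x c s := by
  have h := congrArg (aeval (x - algebraMap K A c)) (smul_binomPoly_succ_comp_X_add_one r s)
  simp only [map_smul, map_add, map_mul, aeval_comp, map_sub, aeval_X, map_one, aeval_C] at h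
  have hc : x - algebraMap K A (c - 1) = x - algebraMap K A c + 1 := by
    rw [map_sub, map_one]; abel
  have hcsr : x - algebraMap K A (c + s - r)
      = x - algebraMap K A c - (algebraMap K A s - algebraMap K A r) := by
    rw [map_sub, map_add]; abel
  rwa [binomOf_eq_aeval, binomOf_eq_aeval, binomOf_eq_aeval, hc, hcsr]

theorem semiconjBy_binomOf {h x : A} {r : K} (hx : h * x - x * h = r • x) (c : K) (s : ℕ) :
    SemiconjBy x (binomOf K h c s) (binomOf K h (c + r) s) := by
  rw [binomOf_eq_aeval, binomOf_eq_aeval]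
  exact (semiconjBy_sub_algebraMap hx c).aeval _

theorem dividedPow_zero (x : A) : dividedPow K x 0 = 1 := by
  simp [dividedPow]

theorem mul_dividedPow [CharZero K] (x : A) (k : ℕ) :
    x * dividedPow K x k = ((k : K) + 1) • dividedPow K x (k + 1) := by
  rw [dividedPow, dividedPow, mul_smul_comm, ← pow_succ', smul_smul, Nat.factorial_succ]
  congr 1
  push_cast
  field_simp

theorem mul_dividedPow_succ_of_sl2 [CharZero K] {e f h : A} (hef : e * f - f * e = h)
    (hhf : h * f - f * h = (-2 : K) • f) (n : ℕ) :
    e * dividedPow K f (n + 1)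
      = dividedPow K f (n + 1) * e + dividedPow K f n * (h - algebraMap K A n) := by
  have hfac : ((n + 1).factorial : K)⁻¹ * ((n : K) + 1) = (n.factorial : K)⁻¹ := by
    rw [Nat.factorial_succ]
    push_cast
    field_simp
  rw [dividedPow, dividedPow, mul_smul_comm, mul_pow_succ_of_sl2 hef hhf, smul_add, smul_smul,
    hfac, smul_mul_assoc, smul_mul_assoc]

variable (K) in
/-- The zero extension makes `mul_dividedPowInt_of_sl2` hold for every integer, so the induction
on `ℓ` needs no case distinction at `s = m`. -/
noncomputable def dividedPowInt (x : A) : ℤ → A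
  | (n : ℕ) => dividedPow K x n
  | .negSucc _ => 0

@[simp]
theorem dividedPowInt_natCast (x : A) (n : ℕ) : dividedPowInt K x n = dividedPow K x n := rfl

theorem dividedPowInt_of_neg (x : A) {a : ℤ} (ha : a < 0) : dividedPowInt K x a = 0 := by
  rcases a with n | n
  · exact absurd ha (Int.natCast_nonneg n).not_gt
  · rfl

theorem mul_dividedPowInt_of_sl2 [CharZero K] {e f h : A} (hef : e * f - f * e = h)
    (hhf : h * f - f * h = (-2 : K) • f) (a : ℤ) :
    e * dividedPowInt K f a
      = dividedPowInt K f a * e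
        + dividedPowInt K f (a - 1) * (h - algebraMap K A ((a - 1 : ℤ) : K)) := by
  rcases a with (_ | n) | n
  · rw [Int.ofNat_eq_natCast, dividedPowInt_natCast, dividedPow_zero,
      dividedPowInt_of_neg f (by omega)]
    simp
  · have hn : ((n + 1 : ℕ) : ℤ) - 1 = n := by omega
    rw [Int.ofNat_eq_natCast, hn, dividedPowInt_natCast, dividedPowInt_natCast, Int.cast_natCast]
    exact mul_dividedPow_succ_of_sl2 hef hhf n
  · simp [dividedPowInt_of_neg, Int.negSucc_lt_zero]

theorem mul_dividedPowInt_mul_binomOf_mul_dividedPow_of_sl2 [CharZero K] {e f h : A}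
    (hef : e * f - f * e = h) (hhe : h * e - e * h = (2 : K) • e)
    (hhf : h * f - f * h = (-2 : K) • f) (a : ℤ) (b s : ℕ) (c : K) :
    e * (dividedPowInt K f a * binomOf K h c s * dividedPow K e b)
      = ((b : K) + 1) • (dividedPowInt K f a * binomOf K h (c + 2) s * dividedPow K e (b + 1))
        + dividedPowInt K f (a - 1) * (h - algebraMap K A ((a - 1 : ℤ) : K)) * binomOf K h c s
          * dividedPow K e b := by
  rw [← mul_assoc, ← mul_assoc, mul_dividedPowInt_of_sl2 hef hhf, add_mul, add_mul]
  congr 1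
  rw [mul_assoc (dividedPowInt K f a) e, (semiconjBy_binomOf hhe c s).eq, ← mul_assoc, mul_assoc,
    mul_dividedPow, mul_smul_comm]

end Algebra

theorem Finset.sum_range_succ_eq_of_split {M : Type*} [AddCommMonoid M] {n : ℕ}
    {x y g d : ℕ → M} (hx : ∀ s < n + 1, x s = g s + d s) (hy₀ : y 0 = g 0)
    (hy : ∀ t < n + 1, y (t + 1) = g (t + 1) + d t) (hg : g (n + 1) = 0) :
    ∑ s ∈ Finset.range (n + 2), y s = ∑ s ∈ Finset.range (n + 1), x s := by
  rw [Finset.sum_range_succ', Finset.sum_congr rfl fun t ht => hy t (Finset.mem_range.1 ht),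
    Finset.sum_congr rfl fun s hs => hx s (Finset.mem_range.1 hs), Finset.sum_add_distrib,
    Finset.sum_add_distrib, hy₀, add_right_comm, ← Finset.sum_range_succ' g,
    Finset.sum_range_succ, hg, add_zero]

section Sl2

variable {K : Type} [Field K] [CharZero K] {A : Type} [Ring A] [Algebra K A] {e f h : A}

open Finset

theorem dividedPow_mul_dividedPowInt_eq_sum (hef : e * f - f * e = h)
    (hhe : h * e - e * h = (2 : K) • e) (hhf : h * f - f * h = (-2 : K) • f) (ℓ m : ℕ) :
    dividedPow K e ℓ * dividedPowInt K f m
      = ∑ s ∈ range (ℓ + 1),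
          dividedPowInt K f (m - s) * binomOf K h ((m : K) + ℓ - 2 * s) s
            * dividedPow K e (ℓ - s) := by
  induction ℓ with
  | zero => simp [dividedPow_zero, binomOf_zero]
  | succ ℓ ih =>
    apply smul_right_injective A (Nat.cast_add_one_ne_zero ℓ : (ℓ : K) + 1 ≠ 0)
    dsimp only
    rw [← smul_mul_assoc, ← mul_dividedPow, mul_assoc, ih, mul_sum, smul_sum]
    symm
    apply sum_range_succ_eq_of_split
      (g := fun s => ((ℓ + 1 - s : ℕ) : K) • (dividedPowInt K f (m - s)
        * binomOf K h ((m : K) + ℓ + 2 - 2 * s) s * dividedPow K e (ℓ + 1 - s)))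
      (d := fun s => dividedPowInt K f (m - s - 1) * (h - algebraMap K A ((m - s - 1 : ℤ) : K))
        * binomOf K h ((m : K) + ℓ - 2 * s) s * dividedPow K e (ℓ - s))
    · intro s hs
      rw [mul_dividedPowInt_mul_binomOf_mul_dividedPow_of_sl2 hef hhe hhf,
        show ℓ + 1 - s = ℓ - s + 1 by omega, Nat.cast_succ,
        show (m : K) + ℓ - 2 * s + 2 = m + ℓ + 2 - 2 * s by ring]
    · simp [binomOf_zero]
    · intro t ht
      have hc : (m : K) + ↑(ℓ + 1) - 2 * ↑(t + 1) = (m + ℓ - 2 * t) - 1 := by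
        push_cast; ring
      rw [hc, ← smul_mul_assoc, ← mul_smul_comm, smul_binomOf_sub_one_succ, mul_add, add_mul,
        mul_smul_comm, smul_mul_assoc]
      congr 1
      · rw [Nat.add_sub_add_right, Nat.cast_sub (by omega : t ≤ ℓ), add_sub_add_right_eq_sub,
          show (m : K) + ℓ + 2 - 2 * ↑(t + 1) = m + ℓ - 2 * t by push_cast; ring]
      · rw [Nat.add_sub_add_right, ← mul_assoc,
          show (m : ℤ) - ↑(t + 1) = m - t - 1 by push_cast; ring,
          show (m : K) + ℓ - 2 * t + t - (ℓ + 1) = ((m - t - 1 : ℤ) : K) by push_cast; ring]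
    · simp

theorem dividedPow_mul_dividedPow_eq_sum (hef : e * f - f * e = h)
    (hhe : h * e - e * h = (2 : K) • e) (hhf : h * f - f * h = (-2 : K) • f) (ℓ m : ℕ) :
    dividedPow K e ℓ * dividedPow K f m
      = ∑ s ∈ range (min ℓ m + 1),
          dividedPow K f (m - s) * binomOf K h ((m : K) + ℓ - 2 * s) s
            * dividedPow K e (ℓ - s) := by
  rw [← dividedPowInt_natCast (K := K) f m, dividedPow_mul_dividedPowInt_eq_sum hef hhe hhf]
  symm
  calc _ = ∑ s ∈ range (min ℓ m + 1),
          dividedPowInt K f (m - s) * binomOf K h ((m : K) + ℓ - 2 * s) s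
            * dividedPow K e (ℓ - s) :=
        sum_congr rfl fun s hs => by
          rw [← Nat.cast_sub (by grind), dividedPowInt_natCast]
    _ = _ := by
      refine sum_subset (range_subset_range.2 (by omega)) fun s hs hs' => ?_
      simp only [mem_range] at hs hs'
      rw [dividedPowInt_of_neg f (by omega), zero_mul, zero_mul]

end Sl2

theorem UniversalEnvelopingAlgebra.ι_lie (R L : Type*) [CommRing R] [LieRing L] [LieAlgebra R L]
    (x y : L) : ι R ⁅x, y⁆ = ι R x * ι R y - ι R y * ι R x := by
  let := LieRing.ofAssociativeRing (A := UniversalEnvelopingAlgebra R L)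
  rw [LieHom.map_lie, Ring.lie_def]

/-- Let `l` be a Lie algebra over a field `K` of characteristic zero and
`E, F ∈ l` with `H := [E,F]`, `[H,E] = 2E`, `[H,F] = -2F`.  Then in `U(l)`, for all
`ℓ, m ∈ ℕ`:
`E^(ℓ) F^(m) = Σ_{s=0}^{min(ℓ,m)} F^(m-s) · C(H - m - ℓ + 2s, s) · E^(ℓ-s)`,
where `X^(k) = X^k/k!` and `C(x, s) = x(x-1)⋯(x-s+1)/s!`. -/
theorem dividedPow_sl2_commutation
    (K : Type) [Field K] [CharZero K] (L : Type) [LieRing L] [LieAlgebra K L]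
    (E F H : L) (hH : ⁅E, F⁆ = H)
    (hE : ⁅H, E⁆ = (2 : K) • E) (hF : ⁅H, F⁆ = (-2 : K) • F)
    (ℓ m : ℕ) :
    dividedPow K (UniversalEnvelopingAlgebra.ι K E) ℓ
        * dividedPow K (UniversalEnvelopingAlgebra.ι K F) m
      = ∑ s ∈ Finset.range (min ℓ m + 1),
          dividedPow K (UniversalEnvelopingAlgebra.ι K F) (m - s)
            * binomOf K (UniversalEnvelopingAlgebra.ι K H)
                ((m : K) + (ℓ : K) - 2 * (s : K)) s
            * dividedPow K (UniversalEnvelopingAlgebra.ι K E) (ℓ - s) := by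
  open UniversalEnvelopingAlgebra in
  exact dividedPow_mul_dividedPow_eq_sum (by rw [← ι_lie, hH]) (by rw [← ι_lie, hE, map_smul])
    (by rw [← ι_lie, hF, map_smul]) ℓ m
end

section
/- Let l be a Lie algebra over a field of characteristic zero, and A, B ∈ l with C := [A,B], [A,C] = 0, [B,C] = 0. Then in U(l), for all ℓ, m ∈ N: A^(ℓ) B^(m) = Σ_{q=0}^{min(ℓ,m)} B^(m-q) C^(q) A^(ℓ-q), where X^(k) := X^k/k!. -/
/-! Left multiplication by `a` is `ad a + R_a`, where `R_a` is right multiplication by `a` and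
commutes with `ad a`, so the binomial theorem gives `a^ℓ x = ∑_q C(ℓ,q) (ad a)^q(x) a^(ℓ-q)`.
Because `ad a` is a derivation with `ad a b = c` and `ad a c = 0`, and `c` commutes with `b`,
`(ad a)^q (b^m) = m (m-1) ⋯ (m-q+1) b^(m-q) c^q`, which vanishes for `q > m`. Dividing by
`ℓ! m!` turns `C(ℓ,q) m!/(m-q)!` into `1 / (q! (ℓ-q)! (m-q)!)`. -/

open Finset
open scoped Nat

namespace Ring

variable {R : Type*} [Ring R]

theorem lie_mul (a x y : R) : ⁅a, x * y⁆ = ⁅a, x⁆ * y + x * ⁅a, y⁆ := by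
  simp only [lie_def]
  noncomm_ring

theorem lie_nsmul (n : ℕ) (a x : R) : ⁅a, n • x⁆ = n • ⁅a, x⁆ := by
  rw [lie_def, lie_def, mul_smul_comm, smul_mul_assoc, smul_sub]

end Ring

section

variable {R : Type*} [Ring R]

theorem pow_mul_eq_sum_iterate_lie (a x : R) (ℓ : ℕ) :
    a ^ ℓ * x = ∑ q ∈ range (ℓ + 1), ℓ.choose q • ((⁅a, ·⁆)^[q] x * a ^ (ℓ - q)) := by
  let ad : Module.End ℤ R := LinearMap.mulLeft ℤ a - LinearMap.mulRight ℤ a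
  have hcomm : Commute ad (LinearMap.mulRight ℤ a) :=
    (LinearMap.commute_mulLeft_right a a).sub_left (Commute.refl _)
  calc a ^ ℓ * x = ((ad + LinearMap.mulRight ℤ a) ^ ℓ) x := by
        rw [sub_add_cancel, LinearMap.pow_mulLeft, LinearMap.mulLeft_apply]
    _ = _ := by
        rw [hcomm.add_pow, LinearMap.sum_apply]
        refine sum_congr rfl fun q _ => ?_
        rw [(hcomm.pow_pow _ _).eq, Module.End.mul_apply, Module.End.natCast_apply, map_nsmul,
          Module.End.mul_apply, LinearMap.pow_mulRight, LinearMap.mulRight_apply,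
          Module.End.coe_pow]
        rfl

variable {a b c : R}

theorem lie_pow_of_lie_eq (hab : ⁅a, b⁆ = c) (hbc : Commute b c) (n : ℕ) :
    ⁅a, b ^ n⁆ = n • (b ^ (n - 1) * c) := by
  induction n with
  | zero => simp [Ring.lie_def]
  | succ n ih =>
    rw [pow_succ', Ring.lie_mul, hab, ih, (hbc.symm.pow_right n).eq]
    rcases n with _ | n
    · simp
    · rw [mul_smul_comm, ← mul_assoc, ← pow_succ', Nat.add_sub_cancel, succ_nsmul' _ (n + 1)]
      rfl

theorem iterate_lie_pow_of_lie_eq (hab : ⁅a, b⁆ = c) (hac : Commute a c) (hbc : Commute b c)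
    (m q : ℕ) : (⁅a, ·⁆)^[q] (b ^ m) = m.descFactorial q • (b ^ (m - q) * c ^ q) := by
  induction q with
  | zero => simp
  | succ q ih =>
    rw [Function.iterate_succ_apply', ih, Ring.lie_nsmul, Ring.lie_mul,
      lie_pow_of_lie_eq hab hbc, (hac.pow_right q).lie_eq, mul_zero, add_zero, smul_mul_assoc,
      mul_assoc, ← pow_succ', smul_smul, Nat.descFactorial_succ, Nat.sub_sub, mul_comm]

theorem pow_mul_pow_eq_sum_of_lie_eq (hab : ⁅a, b⁆ = c) (hac : Commute a c) (hbc : Commute b c)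
    (ℓ m : ℕ) : a ^ ℓ * b ^ m = ∑ q ∈ range (min ℓ m + 1),
      (ℓ.choose q * m.descFactorial q) • (b ^ (m - q) * c ^ q * a ^ (ℓ - q)) := by
  calc a ^ ℓ * b ^ m = ∑ q ∈ range (ℓ + 1),
        (ℓ.choose q * m.descFactorial q) • (b ^ (m - q) * c ^ q * a ^ (ℓ - q)) := by
        rw [pow_mul_eq_sum_iterate_lie]
        refine sum_congr rfl fun q _ => ?_
        rw [iterate_lie_pow_of_lie_eq hab hac hbc, smul_mul_assoc, smul_smul]
    _ = _ := by
        refine (sum_subset (range_subset_range.mpr (by omega)) fun q hqℓ hq => ?_).symm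
        have hmq : m < q := by simp only [mem_range] at hqℓ hq; omega
        rw [Nat.descFactorial_eq_zero_iff_lt.mpr hmq, mul_zero, zero_smul]

end

theorem Nat.inv_factorial_mul_inv_factorial_mul_choose_mul_descFactorial {K : Type*} [Field K]
    [CharZero K] {ℓ m q : ℕ} (hℓ : q ≤ ℓ) (hm : q ≤ m) :
    (ℓ ! : K)⁻¹ * (m ! : K)⁻¹ * ((ℓ.choose q * m.descFactorial q : ℕ) : K)
      = ((m - q)! : K)⁻¹ * (q ! : K)⁻¹ * ((ℓ - q)! : K)⁻¹ := by
  have hchoose : (ℓ.choose q : K) ≠ 0 := Nat.cast_ne_zero.mpr (Nat.choose_pos hℓ).ne'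
  have hdesc : (m.descFactorial q : K) ≠ 0 :=
    Nat.cast_ne_zero.mpr (Nat.descFactorial_pos.mpr hm).ne'
  rw [← Nat.choose_mul_factorial_mul_factorial hℓ, ← Nat.factorial_mul_descFactorial hm]
  push_cast
  field_simp

theorem dividedPow_mul_dividedPow_of_lie_eq {K R : Type} [Field K] [CharZero K] [Ring R]
    [Algebra K R] {a b c : R} (hab : ⁅a, b⁆ = c) (hac : Commute a c) (hbc : Commute b c)
    (ℓ m : ℕ) :
    dividedPow K a ℓ * dividedPow K b m
      = ∑ q ∈ range (min ℓ m + 1),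
          dividedPow K b (m - q) * dividedPow K c q * dividedPow K a (ℓ - q) := by
  simp only [dividedPow]
  rw [smul_mul_smul_comm, pow_mul_pow_eq_sum_of_lie_eq hab hac hbc, smul_sum]
  refine sum_congr rfl fun q hq => ?_
  have hqℓ : q ≤ ℓ := by simp only [mem_range] at hq; omega
  have hqm : q ≤ m := by simp only [mem_range] at hq; omega
  rw [smul_mul_smul_comm, smul_mul_smul_comm, ← Nat.cast_smul_eq_nsmul K, smul_smul,
    Nat.inv_factorial_mul_inv_factorial_mul_choose_mul_descFactorial hqℓ hqm]

/-- Let `l` be a Lie algebra over a field of characteristic zero and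
`A, B ∈ l` with `C := [A,B]`, `[A,C] = 0`, `[B,C] = 0`.  Then in `U(l)`, for all
`ℓ, m ∈ ℕ`:  `A^(ℓ) B^(m) = Σ_{q=0}^{min(ℓ,m)} B^(m-q) C^(q) A^(ℓ-q)`. -/
theorem dividedPow_heisenberg_commutation
    (K : Type) [Field K] [CharZero K] (L : Type) [LieRing L] [LieAlgebra K L]
    (A B C : L) (hC : ⁅A, B⁆ = C) (hAC : ⁅A, C⁆ = 0) (hBC : ⁅B, C⁆ = 0)
    (ℓ m : ℕ) :
    dividedPow K (UniversalEnvelopingAlgebra.ι K A) ℓ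
        * dividedPow K (UniversalEnvelopingAlgebra.ι K B) m
      = ∑ q ∈ Finset.range (min ℓ m + 1),
          dividedPow K (UniversalEnvelopingAlgebra.ι K B) (m - q)
            * dividedPow K (UniversalEnvelopingAlgebra.ι K C) q
            * dividedPow K (UniversalEnvelopingAlgebra.ι K A) (ℓ - q) := by
  -- the commutator Lie ring on an associative ring is not a global instance in Mathlib
  let _ : LieRing (UniversalEnvelopingAlgebra K L) := LieRing.ofAssociativeRing
  set ι := UniversalEnvelopingAlgebra.ι K (L := L)
  have hab : ⁅ι A, ι B⁆ = ι C := by rw [← hC]; exact (ι.map_lie A B).symm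
  have hac : Commute (ι A) (ι C) := commute_iff_lie_eq.mpr (by rw [← ι.map_lie, hAC, map_zero])
  have hbc : Commute (ι B) (ι C) := commute_iff_lie_eq.mpr (by rw [← ι.map_lie, hBC, map_zero])
  exact dividedPow_mul_dividedPow_of_lie_eq hab hac hbc ℓ m
end

section
/- Let l be a Lie algebra over a field of characteristic zero and L, M ∈ l with N := [L,M], 2T := [L,N], and assume [M,N] = 0 and [L,T] = 0. Then in U(l), for all ℓ, m ∈ N: L^(ℓ) M^(m) = Σ_{s=0}^{min(ℓ,m)} M^(m-s) Σ_{t+q=s} T^(t) N^(q) L^(ℓ-2t-q), where X^(k) := X^k/k! (interpreted as 0 when k < 0). -/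
open Finset PowerSeries

/-- The truncated exponents `n - 1`, `n - 2` only occur with coefficient `0`. -/
theorem pow_mul_eq_of_mul_eq_add {R : Type*} [Ring R] {a b c e : R}
    (hab : a * b = b * a + c) (hac : a * c = c * a + e) (hae : Commute a e) (n : ℕ) :
    a ^ n * b = b * a ^ n + n • (c * a ^ (n - 1)) + n.choose 2 • (e * a ^ (n - 2)) := by
  induction n with
  | zero => simp
  | succ n ih =>
    have hae' : ∀ k, a * (e * a ^ k) = e * a ^ (k + 1) := fun k => by
      rw [← mul_assoc, hae.eq, mul_assoc, pow_succ']
    rw [pow_succ', mul_assoc, ih, mul_add, mul_add, ← mul_assoc, hab, mul_smul_comm,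
      mul_smul_comm, ← mul_assoc a c, hac, hae']
    rcases n with _ | _ | n
    · simp
    · simp
      noncomm_ring
    · rw [Nat.choose_succ_succ' (n + 2) 1, Nat.choose_one_right]
      simp only [Nat.add_sub_cancel, show n + 2 + 1 - 2 = n + 1 by omega,
        show n + 2 - 2 + 1 = n + 1 by omega, add_mul, mul_assoc, ← pow_succ', smul_add, add_smul]
      abel

section DividedPow

variable {K : Type} [Field K] {A : Type} [Ring A] [Algebra K A]

theorem Commute.dividedPow_add [CharZero K] {x y : A} (h : Commute x y) (n : ℕ) :
    dividedPow K (x + y) n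
      = ∑ p ∈ antidiagonal n, dividedPow K x p.1 * dividedPow K y p.2 := by
  rw [dividedPow, h.add_pow', smul_sum]
  refine sum_congr rfl fun p hp => ?_
  rw [HasAntidiagonal.mem_antidiagonal] at hp
  subst hp
  rw [dividedPow, dividedPow, smul_mul_smul, ← Nat.cast_smul_eq_nsmul K, smul_smul]
  congr 1
  have h := Nat.choose_mul_factorial_mul_factorial (Nat.le_add_right p.1 p.2)
  rw [add_tsub_cancel_left] at h
  have hc : ((p.1 + p.2).choose p.1 : K) ≠ 0 := by
    exact_mod_cast (Nat.choose_pos (Nat.le_add_right p.1 p.2)).ne'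
  rw [← h]
  push_cast
  field_simp

theorem Commute.dividedPow_mul {x y : A} (h : Commute x y) (n : ℕ) :
    dividedPow K (x * y) n = dividedPow K x n * y ^ n := by
  rw [dividedPow, dividedPow, h.mul_pow, smul_mul_assoc]

theorem PowerSeries.C_smul (r : K) (x : A) : C (r • x) = r • C x := by
  ext n
  simp only [coeff_C, coeff_smul]
  split_ifs <;> simp

theorem PowerSeries.C_dividedPow (x : A) (n : ℕ) :
    C (dividedPow K x n) = dividedPow K (C x) n := by
  rw [dividedPow, dividedPow, C_smul, map_pow]

theorem PowerSeries.dividedPow_C_mul_X_pow (x : A) (k n : ℕ) :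
    dividedPow K (C x * X ^ k) n = C (dividedPow K x n) * X ^ (k * n) := by
  rw [(commute_X_pow _ k).dividedPow_mul, C_dividedPow, pow_mul]

theorem PowerSeries.commute_C_mul_X_pow {x y : A} (h : Commute x y) (i j : ℕ) :
    Commute (C x * X ^ i) (C y * X ^ j) :=
  ((h.map C).mul_right (commute_X_pow _ j)).mul_left (commute_X_pow _ i).symm

theorem PowerSeries.dividedPow_C_add_C_mul_X_pow_add_C_mul_X_pow [CharZero K] {b c d : A}
    (hbc : Commute b c) (hbd : Commute b d) (hdc : Commute d c) (i j m : ℕ) :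
    dividedPow K (C b + (C d * X ^ i + C c * X ^ j)) m
      = ∑ s ∈ range (m + 1), C (dividedPow K b (m - s))
          * ∑ p ∈ antidiagonal s, C (dividedPow K d p.1) * C (dividedPow K c p.2)
            * X ^ (i * p.1 + j * p.2) := by
  have hb : Commute (C b) (C d * X ^ i + C c * X ^ j) :=
    ((hbd.map C).mul_right (commute_X_pow _ i)).add_right
      ((hbc.map C).mul_right (commute_X_pow _ j))
  rw [hb.dividedPow_add, ← Nat.sum_antidiagonal_swap (M := A⟦X⟧),
    Nat.sum_antidiagonal_eq_sum_range_succ_mk]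
  refine sum_congr rfl fun s _ => ?_
  rw [Prod.swap_prod_mk, (commute_C_mul_X_pow hdc i j).dividedPow_add, mul_sum, mul_sum,
    C_dividedPow]
  refine sum_congr rfl fun p _ => ?_
  rw [dividedPow_C_mul_X_pow, dividedPow_C_mul_X_pow, pow_add, mul_assoc, mul_assoc,
    ← mul_assoc (X ^ _), X_pow_mul, mul_assoc]

theorem dividedPow_add_two_mul_eq_of_mul_eq_add [CharZero K] {a b c d : A}
    (hab : a * b = b * a + c) (hac : a * c = c * a + (2 : K) • d) (had : Commute a d) (n : ℕ) :
    dividedPow K a (n + 2) * b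
      = b * dividedPow K a (n + 2) + d * dividedPow K a n + c * dividedPow K a (n + 1) := by
  have h := pow_mul_eq_of_mul_eq_add hab hac (had.smul_right (2 : K)) (n + 2)
  rw [show n + 2 - 1 = n + 1 from rfl, Nat.add_sub_cancel] at h
  simp only [← Nat.cast_smul_eq_nsmul K, Nat.cast_choose_two, smul_mul_assoc] at h
  simp only [dividedPow, smul_mul_assoc, mul_smul_comm, h]
  have h₂ : (n : K) + 1 + 1 ≠ 0 := by exact_mod_cast Nat.succ_ne_zero (n + 1)
  match_scalars <;> push_cast [Nat.factorial_succ] <;> field_simp <;> ring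

def dividedPowSeries (K : Type) [Field K] {A : Type} [Ring A] [Algebra K A] (x : A) : A⟦X⟧ :=
  mk (dividedPow K x)

theorem semiconjBy_dividedPowSeries_C [CharZero K] {a b c d : A} (hab : a * b = b * a + c)
    (hac : a * c = c * a + (2 : K) • d) (had : Commute a d) :
    SemiconjBy (dividedPowSeries K a) (C b) (C b + (C d * X ^ 2 + C c * X ^ 1)) := by
  refine PowerSeries.ext fun n => ?_
  simp only [coeff_mul_C, add_mul, mul_assoc, map_add, coeff_C_mul, coeff_X_pow_mul',
    dividedPowSeries, coeff_mk]
  rcases n with _ | _ | n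
  · simp [dividedPow]
  · simp [dividedPow, hab]
  · simp [dividedPow_add_two_mul_eq_of_mul_eq_add hab hac had, add_assoc]

theorem dividedPowSeries_mul_C_dividedPow [CharZero K] {a b c d : A} (hab : a * b = b * a + c)
    (hac : a * c = c * a + (2 : K) • d) (had : Commute a d) (m : ℕ) :
    dividedPowSeries K a * C (dividedPow K b m)
      = dividedPow K (C b + (C d * X ^ 2 + C c * X ^ 1)) m * dividedPowSeries K a := by
  rw [C_dividedPow]
  exact ((semiconjBy_dividedPowSeries_C hab hac had).pow_right m).smul_right _

theorem dividedPow_mul_dividedPow_eq_sum_s3 [CharZero K] {a b c d : A} (hab : a * b = b * a + c)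
    (hac : a * c = c * a + (2 : K) • d) (had : Commute a d) (hbc : Commute b c)
    (hbd : Commute b d) (hdc : Commute d c) (ℓ m : ℕ) :
    dividedPow K a ℓ * dividedPow K b m
      = ∑ s ∈ range (min ℓ m + 1), dividedPow K b (m - s)
          * ∑ p ∈ antidiagonal s, dividedPow K d p.1 * dividedPow K c p.2
            * (if 2 * p.1 + p.2 ≤ ℓ then dividedPow K a (ℓ - (2 * p.1 + p.2)) else 0) := by
  calc dividedPow K a ℓ * dividedPow K b m
      = coeff ℓ (dividedPowSeries K a * C (dividedPow K b m)) := by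
        rw [coeff_mul_C, dividedPowSeries, coeff_mk]
    _ = ∑ s ∈ range (m + 1), dividedPow K b (m - s)
          * ∑ p ∈ antidiagonal s, dividedPow K d p.1 * dividedPow K c p.2
            * (if 2 * p.1 + p.2 ≤ ℓ then dividedPow K a (ℓ - (2 * p.1 + p.2)) else 0) := by
        rw [dividedPowSeries_mul_C_dividedPow hab hac had,
          dividedPow_C_add_C_mul_X_pow_add_C_mul_X_pow hbc hbd hdc]
        simp only [sum_mul, mul_sum, map_sum, mul_assoc, coeff_C_mul, coeff_X_pow_mul', one_mul,
          dividedPowSeries, coeff_mk]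
    _ = _ := by
        refine (sum_subset (range_subset_range.2 (by omega)) fun s hs hs' => ?_).symm
        refine mul_eq_zero_of_right _ (sum_eq_zero fun p hp => ?_)
        rw [mem_range] at hs hs'
        rw [HasAntidiagonal.mem_antidiagonal] at hp
        rw [if_neg (by omega), mul_zero]

end DividedPow

theorem UniversalEnvelopingAlgebra.ι_mul_ι {R L : Type*} [CommRing R] [LieRing L] [LieAlgebra R L]
    (x y : L) :
    ι R x * ι R y = ι R y * ι R x + ι R ⁅x, y⁆ := by
  let := LieRing.ofAssociativeRing (A := UniversalEnvelopingAlgebra R L)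
  rw [LieHom.map_lie, Ring.lie_def, add_sub_cancel]

theorem UniversalEnvelopingAlgebra.commute_ι_of_lie_eq_zero {R L : Type*} [CommRing R] [LieRing L]
    [LieAlgebra R L] {x y : L} (h : ⁅x, y⁆ = 0) : Commute (ι R x) (ι R y) := by
  rw [Commute, SemiconjBy, ι_mul_ι, h, map_zero, add_zero]

/-- Let `l` be a Lie algebra over a field of characteristic zero and
`L, M ∈ l` with `N := [L,M]`, `2T := [L,N]`, `[M,N] = 0`, `[L,T] = 0`.  Then in `U(l)`,
for all `ℓ, m ∈ ℕ`:
`L^(ℓ) M^(m) = Σ_{s=0}^{min(ℓ,m)} M^(m-s) Σ_{t+q=s} T^(t) N^(q) L^(ℓ-2t-q)`,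
where `L^(k)` is interpreted as `0` when `k < 0` (i.e. when `2t + q > ℓ`). -/
theorem dividedPow_cubic_commutation
    (K : Type) [Field K] [CharZero K] (𝔩 : Type) [LieRing 𝔩] [LieAlgebra K 𝔩]
    (L M N T : 𝔩) (hN : ⁅L, M⁆ = N) (hT : ⁅L, N⁆ = (2 : K) • T)
    (hMN : ⁅M, N⁆ = 0) (hLT : ⁅L, T⁆ = 0)
    (ℓ m : ℕ) :
    dividedPow K (UniversalEnvelopingAlgebra.ι K L) ℓ
        * dividedPow K (UniversalEnvelopingAlgebra.ι K M) m
      = ∑ s ∈ Finset.range (min ℓ m + 1),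
          dividedPow K (UniversalEnvelopingAlgebra.ι K M) (m - s)
            * ∑ p ∈ Finset.HasAntidiagonal.antidiagonal s,
                dividedPow K (UniversalEnvelopingAlgebra.ι K T) p.1
                  * dividedPow K (UniversalEnvelopingAlgebra.ι K N) p.2
                  * (if 2 * p.1 + p.2 ≤ ℓ then
                      dividedPow K (UniversalEnvelopingAlgebra.ι K L) (ℓ - (2 * p.1 + p.2))
                    else 0) := by
  have hMT : ⁅M, T⁆ = 0 := by
    have jacobi := lie_lie L M N
    rw [hN, lie_self, hMN, lie_zero, hT, lie_smul, zero_sub, eq_comm, neg_eq_zero] at jacobi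
    exact (smul_eq_zero.mp jacobi).resolve_left two_ne_zero
  have hNT : ⁅N, T⁆ = 0 := by
    simpa [hN, hMT, hLT] using lie_lie L M T
  open UniversalEnvelopingAlgebra in
  exact dividedPow_mul_dividedPow_eq_sum_s3 (by rw [ι_mul_ι, hN]) (by rw [ι_mul_ι, hT, map_smul])
    (commute_ι_of_lie_eq_zero hLT) (commute_ι_of_lie_eq_zero hMN)
    (commute_ι_of_lie_eq_zero hMT) (commute_ι_of_lie_eq_zero hNT).symm ℓ m
end
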